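/- In the framed sphere braid Lie algebra 𝔣𝔅₅, the relation X₂₃ + X₅₃ = −X₁₃ − X₃₃ − X₄₃ holds, and the element X₄₁ commutes with X₁₃ + X₃₃ + X₃₄ + X₁₄; consequently, for any formal series Φ, one has Φ(X₂₃ + X₅₃, X₃₄) = Φ(X₄₁, X₃₄). -/

import Mathlib

open FreeLieAlgebra

/-- Defining relations of the framed Drinfeld–Kohno Lie algebra 𝔣𝔱ₙ (generators out of
the range `1 ≤ i, j ≤ n` are set to zero). -/
def ftRels (k : Type) [Field k] (n : ℕ) : Set (FreeLieAlgebra k (ℕ × ℕ)) :=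
  { x | (∃ i j : ℕ, x = of k (i, j) - of k (j, i)) ∨
        (∃ i j : ℕ, ¬(1 ≤ i ∧ i ≤ n ∧ 1 ≤ j ∧ j ≤ n) ∧ x = of k (i, j)) ∨
        (∃ i j l m : ℕ, i ≠ l ∧ i ≠ m ∧ j ≠ l ∧ j ≠ m ∧ x = ⁅of k (i, j), of k (l, m)⁆) ∨
        (∃ i j l : ℕ, i ≠ j ∧ j ≠ l ∧ i ≠ l ∧ x = ⁅of k (i, j), of k (l, i) + of k (l, j)⁆) ∨
        (∃ i j l : ℕ, x = ⁅of k (i, i), of k (j, l)⁆) }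

/-- Defining relations of the framed sphere braid Lie algebra 𝔣𝔅ₘ: those of 𝔣𝔱ₘ
together with the residue relations `Σ_{j=1}^m X_{ij} = 0` for each `1 ≤ i ≤ m`. -/
def fBRels (k : Type) [Field k] (m : ℕ) : Set (FreeLieAlgebra k (ℕ × ℕ)) :=
  ftRels k m ∪ { x | ∃ i : ℕ, 1 ≤ i ∧ i ≤ m ∧ x = ∑ j ∈ Finset.Icc 1 m, of k (i, j) }

noncomputable def fBIdeal (k : Type) [Field k] (m : ℕ) : LieIdeal k (FreeLieAlgebra k (ℕ × ℕ)) :=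
  LieSubmodule.lieSpan k _ (fBRels k m)

/-- The framed sphere braid Lie algebra 𝔣𝔅ₘ. -/
abbrev fB (k : Type) [Field k] (m : ℕ) := FreeLieAlgebra k (ℕ × ℕ) ⧸ fBIdeal k m

/-- The completed enveloping algebra placeholder: the universal enveloping algebra of 𝔣𝔅₅. -/
abbrev UfB (k : Type) [Field k] := UniversalEnvelopingAlgebra k (fB k 5)

/-- The image `X i j` of the generator `X_{ij}` of 𝔣𝔅₅ in its enveloping algebra. -/
noncomputable def X (k : Type) [Field k] (i j : ℕ) : UfB k :=
  UniversalEnvelopingAlgebra.ι k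
    (LieSubmodule.Quotient.mk' (fBIdeal k 5) (of k (i, j)))

section Aux
variable (k : Type) [Field k]

noncomputable def Fm (x : FreeLieAlgebra k (ℕ × ℕ)) : UfB k :=
  UniversalEnvelopingAlgebra.ι k (LieSubmodule.Quotient.mk' (fBIdeal k 5) x)

lemma Fm_of (i j : ℕ) : Fm k (of k (i, j)) = X k i j := rfl

lemma Fm_add (x y : FreeLieAlgebra k (ℕ × ℕ)) : Fm k (x + y) = Fm k x + Fm k y := by
  unfold Fm; rw [map_add, map_add]

lemma Fm_sub (x y : FreeLieAlgebra k (ℕ × ℕ)) : Fm k (x - y) = Fm k x - Fm k y := by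
  unfold Fm; rw [map_sub, map_sub]

attribute [local instance] LieRing.ofAssociativeRing in
lemma Fm_lie (x y : FreeLieAlgebra k (ℕ × ℕ)) :
    Fm k ⁅x, y⁆ = Fm k x * Fm k y - Fm k y * Fm k x := by
  unfold Fm
  rw [show (LieSubmodule.Quotient.mk' (fBIdeal k 5)) ⁅x, y⁆
      = ⁅LieSubmodule.Quotient.mk' (fBIdeal k 5) x,
         LieSubmodule.Quotient.mk' (fBIdeal k 5) y⁆ from rfl,
    LieHom.map_lie, Ring.lie_def]

lemma Fm_rel {x : FreeLieAlgebra k (ℕ × ℕ)} (hx : x ∈ fBRels k 5) : Fm k x = 0 := by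
  have hx' : x ∈ fBIdeal k 5 := LieSubmodule.subset_lieSpan hx
  unfold Fm
  rw [(LieSubmodule.Quotient.mk_eq_zero _).mpr hx', map_zero]

lemma X_symm (i j : ℕ) : X k i j = X k j i := by
  have h := Fm_rel k (x := of k (i, j) - of k (j, i)) (Or.inl (Or.inl ⟨i, j, rfl⟩))
  rw [Fm_sub, Fm_of, Fm_of, sub_eq_zero] at h
  exact h

lemma X_comm4 (i j l : ℕ) (hij : i ≠ j) (hjl : j ≠ l) (hil : i ≠ l) :
    Commute (X k i j) (X k l i + X k l j) := by
  have h := Fm_rel k (x := ⁅of k (i, j), of k (l, i) + of k (l, j)⁆)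
    (Or.inl (Or.inr (Or.inr (Or.inr (Or.inl ⟨i, j, l, hij, hjl, hil, rfl⟩)))))
  rw [Fm_lie, Fm_add, Fm_of, Fm_of, Fm_of, sub_eq_zero] at h
  exact h

lemma X_central (i j l : ℕ) : Commute (X k i i) (X k j l) := by
  have h := Fm_rel k (x := ⁅of k (i, i), of k (j, l)⁆)
    (Or.inl (Or.inr (Or.inr (Or.inr (Or.inr ⟨i, j, l, rfl⟩)))))
  rw [Fm_lie, Fm_of, Fm_of, sub_eq_zero] at h
  exact h

lemma X_residue3 : X k 3 1 + X k 3 2 + X k 3 3 + X k 3 4 + X k 3 5 = 0 := by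
  have h := Fm_rel k (x := ∑ j ∈ Finset.Icc 1 5, of k (3, j))
    (Or.inr ⟨3, by norm_num, by norm_num, rfl⟩)
  have e : (∑ j ∈ Finset.Icc 1 5, of k (3, j))
      = of k (3, 1) + of k (3, 2) + of k (3, 3) + of k (3, 4) + of k (3, 5) := by
    rw [show (Finset.Icc 1 5 : Finset ℕ) = {1, 2, 3, 4, 5} from by decide]
    rw [Finset.sum_insert (by decide), Finset.sum_insert (by decide),
      Finset.sum_insert (by decide), Finset.sum_insert (by decide),
      Finset.sum_singleton]
    abel
  rw [e, Fm_add, Fm_add, Fm_add, Fm_add, Fm_of, Fm_of, Fm_of, Fm_of, Fm_of] at h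
  exact h

end Aux

/-- In 𝔣𝔅₅, the relation `X₂₃ + X₅₃ = −X₁₃ − X₃₃ − X₄₃` holds, the element `X₄₁`
commutes with `X₁₃ + X₃₃ + X₃₄ + X₁₄`, and consequently for any two-variable evaluation
`Φ` unchanged by adding commuting corrections to its arguments one has
`Φ(X₂₃ + X₅₃, X₃₄) = Φ(X₄₁, X₃₄)`. -/
theorem sphereBraid5_Phi_X41_arg
    (k : Type) [Field k] [CharZero k]
    (Φ : UfB k → UfB k → UfB k)
    (hΦl : ∀ a b z : UfB k, Commute z a → Commute z b → Φ (a + z) b = Φ a b)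
    (hΦr : ∀ a b z : UfB k, Commute z a → Commute z b → Φ a (b + z) = Φ a b) :
    X k 2 3 + X k 5 3 = -X k 1 3 - X k 3 3 - X k 4 3 ∧
    Commute (X k 1 3 + X k 3 3 + X k 3 4 + X k 1 4) (X k 4 1) ∧
    Φ (X k 2 3 + X k 5 3) (X k 3 4) = Φ (X k 4 1) (X k 3 4) := by
  have s23 := X_symm k 2 3
  have s53 := X_symm k 5 3
  have s13 := X_symm k 1 3
  have s43 := X_symm k 4 3
  have s41 := X_symm k 4 1
  have res := X_residue3 k
  have h1 : X k 2 3 + X k 5 3 = -X k 1 3 - X k 3 3 - X k 4 3 := by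
    rw [s23, s53, s13, s43, ← sub_eq_zero]
    rw [show X k 3 2 + X k 3 5 - (-X k 3 1 - X k 3 3 - X k 3 4)
        = X k 3 1 + X k 3 2 + X k 3 3 + X k 3 4 + X k 3 5 from by abel]
    exact res
  have c1 : Commute (X k 1 4) (X k 3 1 + X k 3 4) :=
    X_comm4 k 1 4 3 (by norm_num) (by norm_num) (by norm_num)
  have c2 : Commute (X k 3 4) (X k 1 3 + X k 1 4) :=
    X_comm4 k 3 4 1 (by norm_num) (by norm_num) (by norm_num)
  have h2 : Commute (X k 1 3 + X k 3 3 + X k 3 4 + X k 1 4) (X k 4 1) := by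
    rw [s41, show X k 1 3 + X k 3 3 + X k 3 4 + X k 1 4
        = (X k 3 1 + X k 3 4) + X k 3 3 + X k 1 4 from by rw [s13]; abel]
    exact (c1.symm.add_left (X_central k 3 1 4)).add_left (Commute.refl _)
  have c3 : Commute (X k 1 3 + X k 3 3 + X k 3 4 + X k 1 4) (X k 3 4) := by
    rw [show X k 1 3 + X k 3 3 + X k 3 4 + X k 1 4
        = (X k 1 3 + X k 1 4) + X k 3 3 + X k 3 4 from by abel]
    exact (c2.symm.add_left (X_central k 3 3 4)).add_left (Commute.refl _)
  refine ⟨h1, h2, ?_⟩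
  have hz : X k 2 3 + X k 5 3
      = X k 4 1 + (-(X k 1 3 + X k 3 3 + X k 3 4 + X k 1 4)) := by
    rw [h1, s43, s41]
    abel
  rw [hz]
  exact hΦl _ _ _ h2.neg_left c3.neg_left
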